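/- arXiv:1206.6032 — 4 statements merged into one kernel-verified Lean document; each statement's English description precedes it below -/
import Mathlib

section
/- If φ(x̄,ȳ) is a mutually algebraic L(M)-formula and ā ∈ M^{lg(ȳ)}, then both ∃ȳ φ(x̄,ȳ) and φ(x̄,ā) are mutually algebraic. -/
open FirstOrder Language Set

open Classical in
/-- Combine assignments on a set and its complement into one assignment. -/
noncomputable def combine {M α : Type} (s : Set α) (u : ↥s → M) (v : ↥sᶜ → M) : α → M :=
  fun a => if h : a ∈ s then u ⟨a, h⟩ else v ⟨a, h⟩

/-- `φ` is a mutually algebraic `L(M)`-formula: for some `N`, for every proper partition of its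
free variables into nonempty `x̄` (indexed by `s`) and `ȳ` (indexed by `sᶜ`),
`M ⊨ ∀ ȳ ∃^{≤N} x̄ φ(x̄,ȳ)`. -/
def IsMA (L : Language) (M : Type) [L.Structure M] {α : Type} (φ : (L[[M]]).Formula α) : Prop :=
  ∃ N : ℕ, ∀ s : Set α, s.Nonempty → sᶜ.Nonempty → ∀ v : ↥sᶜ → M,
    {u : ↥s → M | φ.Realize (combine s u v)}.encard ≤ (N : ℕ∞)

/-- `T(M)`-equivalence of `L(M)`-formulas: equivalence in every model of the elementary
diagram `T(M)`. -/
def TEquiv (L : Language) (M : Type) [L.Structure M] {α : Type} (φ ψ : (L[[M]]).Formula α) : Prop :=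
  ∀ (N : Type) [(L[[M]]).Structure N], N ⊨ L.elementaryDiagram M →
    ∀ v : α → N, φ.Realize v ↔ ψ.Realize v

/-- A partial equality diagram: a Boolean combination of equalities between variables. -/
inductive IsPED {L' : Language} {α : Type} : L'.Formula α → Prop
  | eq (a b : α) : IsPED (Term.equal (Term.var a) (Term.var b))
  | not {φ : L'.Formula α} : IsPED φ → IsPED φ.not
  | inf {φ ψ : L'.Formula α} : IsPED φ → IsPED ψ → IsPED (φ ⊓ ψ)
  | sup {φ ψ : L'.Formula α} : IsPED φ → IsPED ψ → IsPED (φ ⊔ ψ)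

/-- Positive Boolean combinations of formulas satisfying `P`. -/
inductive PosComb {L' : Language} {α : Type} (P : L'.Formula α → Prop) : L'.Formula α → Prop
  | base {φ : L'.Formula α} : P φ → PosComb P φ
  | inf {φ ψ : L'.Formula α} : PosComb P φ → PosComb P ψ → PosComb P (φ ⊓ ψ)
  | sup {φ ψ : L'.Formula α} : PosComb P φ → PosComb P ψ → PosComb P (φ ⊔ ψ)

/-- Boolean combinations of formulas satisfying `P`. -/
inductive BoolComb {L' : Language} {α : Type} (P : L'.Formula α → Prop) : L'.Formula α → Prop
  | base {φ : L'.Formula α} : P φ → BoolComb P φ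
  | not {φ : L'.Formula α} : BoolComb P φ → BoolComb P φ.not
  | inf {φ ψ : L'.Formula α} : BoolComb P φ → BoolComb P ψ → BoolComb P (φ ⊓ ψ)
  | sup {φ ψ : L'.Formula α} : BoolComb P φ → BoolComb P ψ → BoolComb P (φ ⊔ ψ)

/-- `θ(ȳ,z̄)` is a preferred formula: (modulo `T(M)`) it has the form `∃x̄ (R(x̄,ȳ) ∧ S(x̄,ȳ,z̄))`
where the `ȳ`-variables (indexed by the nonempty set `s`) and `z̄`-variables (indexed by `sᶜ`)
partition its free variables, `R` is quantifier-free and mutually algebraic, and `S` is a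
partial equality diagram. -/
def IsPreferred (L : Language) (M : Type) [L.Structure M] {α : Type}
    (θ : (L[[M]]).Formula α) : Prop :=
  ∃ (s : Set α) (n : ℕ) (R : (L[[M]]).Formula (Fin n ⊕ ↥s)) (S : (L[[M]]).Formula (Fin n ⊕ α)),
    s.Nonempty ∧ R.IsQF ∧ IsMA L M R ∧ IsPED S ∧
    ∀ (N : Type) [(L[[M]]).Structure N], N ⊨ L.elementaryDiagram M →
      ∀ v : α → N, θ.Realize v ↔
        ∃ u : Fin n → N, R.Realize (Sum.elim u (fun a : ↥s => v ↑a)) ∧ S.Realize (Sum.elim u v)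

/-- The class `𝒫`: formulas `T(M)`-equivalent to a positive Boolean combination of preferred
formulas. -/
def InP (L : Language) (M : Type) [L.Structure M] {α : Type} (φ : (L[[M]]).Formula α) : Prop :=
  ∃ ψ : (L[[M]]).Formula α, PosComb (IsPreferred L M) ψ ∧ TEquiv L M φ ψ

/-- `φ` is (a formula with dummy variables added to) a mutually algebraic formula in a subtuple
of the variables. -/
def IsMASub (L : Language) (M : Type) [L.Structure M] {α : Type}
    (φ : (L[[M]]).Formula α) : Prop :=
  ∃ (s : Set α) (ψ : (L[[M]]).Formula ↥s), IsMA L M ψ ∧ φ = ψ.relabel (fun a : ↥s => ↑a)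

/-- `M` is a mutually algebraic structure: every `L(M)`-formula is `T(M)`-equivalent to a
Boolean combination of mutually algebraic formulas (in subtuples of its variables). -/
def IsMAStructure (L : Language) (M : Type) [L.Structure M] : Prop :=
  ∀ (n : ℕ) (φ : (L[[M]]).Formula (Fin n)),
    ∃ ψ : (L[[M]]).Formula (Fin n), BoolComb (IsMASub L M) ψ ∧ TEquiv L M φ ψ

/-- The elementary diagram `T(M)` is model complete: every `L(M)`-formula is `T(M)`-equivalent
to an existential formula. -/
def IsModelComplete (L : Language) (M : Type) [L.Structure M] : Prop :=
  ∀ (n : ℕ) (φ : (L[[M]]).Formula (Fin n)),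
    ∃ (k : ℕ) (ψ : (L[[M]]).Formula (Fin k ⊕ Fin n)), ψ.IsQF ∧
      ∀ (N : Type) [(L[[M]]).Structure N], N ⊨ L.elementaryDiagram M →
        ∀ v : Fin n → N, φ.Realize v ↔ ∃ u : Fin k → N, ψ.Realize (Sum.elim u v)

/-!
Both formulas only have realizations that extend to realizations of `φ`: by a witness `w`
for `∃ȳ φ`, by `ā` for `φ(x̄,ā)`. For such a `ψ(x̄)`, a proper split of `x̄` into unknowns
`x̄₁` and parameters `x̄₂` yields the proper split of `x̄ȳ` into unknowns `x̄₁ȳ` and parameters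
`x̄₂`; a chosen extension is injective on solutions, so `φ`'s bound `N` also bounds `ψ`.
-/

section Combine

variable {M α : Type} {s : Set α}

theorem domRestrict_combine (u : ↥s → M) (v : ↥sᶜ → M) : s.domRestrict (combine s u v) = u := by
  classical exact domRestrict_dite _ _

theorem domRestrict_compl_combine (u : ↥s → M) (v : ↥sᶜ → M) :
    sᶜ.domRestrict (combine s u v) = v := by
  classical exact domRestrict_dite_compl _ _

theorem combine_domRestrict (y : α → M) :
    combine s (s.domRestrict y) (sᶜ.domRestrict y) = y := by
  funext a
  by_cases ha : a ∈ s <;> simp [combine, ha]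

theorem combine_injective (v : ↥sᶜ → M) : Function.Injective fun u : ↥s → M => combine s u v :=
  Function.LeftInverse.injective (g := fun y : α → M => s.domRestrict y) fun u =>
    domRestrict_combine u v

theorem encard_setOf_combine (p : (α → M) → Prop) (x : α → M) :
    {u : ↥s → M | p (combine s u (sᶜ.domRestrict x))}.encard =
      {y : α → M | p y ∧ EqOn y x sᶜ}.encard := by
  rw [← (combine_injective (sᶜ.domRestrict x)).injOn.encard_image]
  congr 1
  ext y
  constructor
  · rintro ⟨u, hu, rfl⟩
    exact ⟨hu, fun a ha => congrFun (domRestrict_compl_combine u (sᶜ.domRestrict x)) ⟨a, ha⟩⟩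
  · rintro ⟨hy, hyx⟩
    have hrestrict : sᶜ.domRestrict y = sᶜ.domRestrict x := funext fun a => hyx a.2
    refine ⟨s.domRestrict y, ?_, ?_⟩
    · show p _
      rwa [← hrestrict, combine_domRestrict]
    · show combine s _ _ = y
      rw [← hrestrict, combine_domRestrict]

end Combine

theorem isMA_iff_encard_fiber_le {L : Language} {M : Type} [L.Structure M] {α : Type}
    {φ : (L[[M]]).Formula α} :
    IsMA L M φ ↔ ∃ N : ℕ, ∀ s : Set α, s.Nonempty → sᶜ.Nonempty → ∀ x : α → M,
      {y : α → M | φ.Realize y ∧ EqOn y x sᶜ}.encard ≤ N := by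
  refine exists_congr fun N => forall₂_congr fun s _ => forall_congr' fun hsc => ?_
  constructor
  · intro hN x
    rw [← encard_setOf_combine]
    exact hN _
  · intro hN v
    let x := combine s (fun _ => v ⟨hsc.some, hsc.some_mem⟩) v
    have hx := hN x
    rwa [← encard_setOf_combine, domRestrict_compl_combine] at hx

theorem IsMA.of_forall_realize_exists_sumElim {L : Language} {M : Type} [L.Structure M]
    {α β : Type} {φ : (L[[M]]).Formula (α ⊕ β)} (hφ : IsMA L M φ) {ψ : (L[[M]]).Formula α}
    (hψ : ∀ y : α → M, ψ.Realize y → ∃ w : β → M, φ.Realize (Sum.elim y w)) :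
    IsMA L M ψ := by
  obtain ⟨N, hN⟩ := isMA_iff_encard_fiber_le.1 hφ
  refine isMA_iff_encard_fiber_le.2 ⟨N, fun s hs hsc x => ?_⟩
  have : Nonempty M := ⟨x hs.some⟩
  let extend (y : α → M) : α ⊕ β → M :=
    Sum.elim y (Classical.epsilon fun w => φ.Realize (Sum.elim y w))
  let t : Set (α ⊕ β) := (Sum.inl '' sᶜ)ᶜ
  have ht : t.Nonempty := ⟨Sum.inl hs.some, fun ⟨a, ha, hinl⟩ =>
    ha (Sum.inl_injective hinl ▸ hs.some_mem)⟩
  have htc : tᶜ = Sum.inl '' sᶜ := compl_compl _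
  refine le_trans (encard_le_encard_of_injOn (f := extend) ?_ ?_)
    (hN t ht (htc ▸ hsc.image Sum.inl) (extend x))
  · rintro y ⟨hy, hyx⟩
    refine ⟨Classical.epsilon_spec (hψ y hy), ?_⟩
    rw [htc]
    rintro _ ⟨a, ha, rfl⟩
    exact hyx ha
  · intro y₁ _ y₂ _ h
    funext a
    exact congrFun h (Sum.inl a)

theorem stmt1_general (L : Language) (M : Type) [L.Structure M] {α β : Type}
    (φ : (L[[M]]).Formula (α ⊕ β)) (abar : β → M) (h : IsMA L M φ)
    (θ₁ : (L[[M]]).Formula α)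
    (hθ₁ : ∀ u : α → M, θ₁.Realize u ↔ ∃ w : β → M, φ.Realize (Sum.elim u w))
    (θ₂ : (L[[M]]).Formula α)
    (hθ₂ : ∀ u : α → M, θ₂.Realize u ↔ φ.Realize (Sum.elim u abar)) :
    IsMA L M θ₁ ∧ IsMA L M θ₂ :=
  ⟨h.of_forall_realize_exists_sumElim fun u hu => (hθ₁ u).1 hu,
    h.of_forall_realize_exists_sumElim fun u hu => ⟨abar, (hθ₂ u).1 hu⟩⟩

/-- If `φ(x̄,ȳ)` is mutually algebraic and `ā ∈ M^{lg ȳ}`, then both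
`∃ȳ φ(x̄,ȳ)` and `φ(x̄,ā)` are mutually algebraic. -/
theorem stmt1 (L : Language) (M : Type) [L.Structure M] {α β : Type} [Finite α] [Finite β]
    (φ : (L[[M]]).Formula (α ⊕ β)) (abar : β → M) (h : IsMA L M φ)
    (θ₁ : (L[[M]]).Formula α)
    (hθ₁ : ∀ u : α → M, θ₁.Realize u ↔ ∃ w : β → M, φ.Realize (Sum.elim u w))
    (θ₂ : (L[[M]]).Formula α)
    (hθ₂ : ∀ u : α → M, θ₂.Realize u ↔ φ.Realize (Sum.elim u abar)) :
    IsMA L M θ₁ ∧ IsMA L M θ₂ :=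
  stmt1_general L M φ abar h θ₁ hθ₁ θ₂ hθ₂
end

section
/- Let k ≥ 1 and let φ_i(z̄_i), for i < k, be mutually algebraic L(M)-formulas such that the intersection ⋂_{i<k} range(z̄_i) of their variable sets is nonempty. Then the conjunction ψ(w̄) := ⋀_{i<k} φ_i(z̄_i), with range(w̄) = ⋃_{i<k} range(z̄_i), is mutually algebraic. -/
open FirstOrder Language Set

/-!
Fix a variable `a₀` shared by all the `φ i`. Given values for the variables outside a proper
subset `t`, some variable `b ∉ t` occurs in some `φ j`, so `φ j` leaves at most `N j` possible
values at `a₀`. Once that value is fixed as well, every `φ i` has a fixed variable, so the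
restriction of a realization to the variables of `φ i` has at most `N i` possibilities; as the
variable sets cover everything, a realization is determined by these restrictions. Hence there
are at most `N j * ∏ i, N i ≤ (∑ i, N i) * ∏ i, N i` realizations.
-/

namespace Set

lemma encard_biUnion_le_encard_mul {ι X : Type*} {C : Set ι} (hC : C.Finite) {f : ι → Set X}
    {m : ℕ∞} (hf : ∀ c ∈ C, (f c).encard ≤ m) : (⋃ c ∈ C, f c).encard ≤ C.encard * m := by
  induction C, hC using Set.Finite.induction_on with
  | empty => simp
  | @insert a C ha _ ih =>
    rw [biUnion_insert, encard_insert_of_notMem ha, add_mul, one_mul, add_comm]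
    exact (encard_union_le _ _).trans <|
      add_le_add (hf a (mem_insert a C)) (ih fun c hc => hf c (mem_insert_of_mem a hc))

end Set

section Combine

variable {M α : Type} {t : Set α} {u : ↥t → M} {v : ↥tᶜ → M}

lemma combine_of_mem {a : α} (h : a ∈ t) : combine t u v a = u ⟨a, h⟩ := dif_pos h

lemma combine_of_notMem {a : α} (h : a ∉ t) : combine t u v a = v ⟨a, h⟩ := dif_neg h

lemma encard_setOf_combine_s3 (P : (α → M) → Prop) (w₀ : α → M) (hv : ∀ a : ↥tᶜ, w₀ a = v a) :
    {u : ↥t → M | P (combine t u v)}.encard = {w | P w ∧ EqOn w w₀ tᶜ}.encard := by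
  have hinj : Function.Injective (fun u : ↥t → M => combine t u v) := fun u u' h =>
    funext fun a => by simpa only [combine_of_mem a.2] using congrFun h a
  rw [← hinj.encard_image]
  congr 1
  ext w
  constructor
  · rintro ⟨u, hu, rfl⟩
    exact ⟨hu, fun a ha => (combine_of_notMem ha).trans (hv ⟨a, ha⟩).symm⟩
  · rintro ⟨hw, hwt⟩
    have hcomb : combine t (t.domRestrict w) v = w := funext fun a => by
      by_cases ha : a ∈ t
      · rw [combine_of_mem ha, domRestrict_apply]
      · rw [combine_of_notMem ha, ← hv ⟨a, ha⟩, hwt ha]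
    exact ⟨t.domRestrict w, by rwa [mem_ofPred_eq, hcomb], hcomb⟩

end Combine

variable {L : Language} {M : Type} [L.Structure M] {α : Type}

def realizeFiber (φ : (L[[M]]).Formula α) (t : Set α) (w₀ : α → M) : Set (α → M) :=
  {w | φ.Realize w ∧ EqOn w w₀ tᶜ}

lemma realizeFiber_empty_subsingleton (φ : (L[[M]]).Formula α) (w₀ : α → M) :
    (realizeFiber φ ∅ w₀).Subsingleton := fun _ hw _ hw' =>
  funext fun a => (hw.2 (notMem_empty a)).trans (hw'.2 (notMem_empty a)).symm

lemma IsMA.exists_encard_realizeFiber_le {φ : (L[[M]]).Formula α} (h : IsMA L M φ) :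
    ∃ N : ℕ, ∀ t : Set α, tᶜ.Nonempty → ∀ w₀ : α → M, (realizeFiber φ t w₀).encard ≤ N := by
  obtain ⟨N, hN⟩ := h
  refine ⟨max N 1, fun t htc w₀ => ?_⟩
  rcases t.eq_empty_or_nonempty with rfl | ht
  · exact (encard_le_one_iff_subsingleton.2 (realizeFiber_empty_subsingleton φ w₀)).trans
      (by exact_mod_cast le_max_right N 1)
  · rw [realizeFiber, ← encard_setOf_combine_s3 _ w₀ (v := tᶜ.domRestrict w₀) fun _ => rfl]
    exact (hN t ht htc _).trans (by exact_mod_cast le_max_left N 1)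

lemma isMA_of_encard_realizeFiber_le {φ : (L[[M]]).Formula α} (N : ℕ)
    (h : ∀ t : Set α, t.Nonempty → tᶜ.Nonempty → ∀ w₀ : α → M, (realizeFiber φ t w₀).encard ≤ N) :
    IsMA L M φ := by
  refine ⟨N, fun t ht htc v => ?_⟩
  obtain ⟨b, hb⟩ := htc
  let w₀ : α → M := combine t (fun _ => v ⟨b, hb⟩) v
  rw [encard_setOf_combine_s3 _ w₀ fun a => combine_of_notMem a.2]
  exact h t ht ⟨b, hb⟩ w₀

lemma restrict_mem_realizeFiber {ψ : (L[[M]]).Formula α} {s : Set α}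
    {φ : (L[[M]]).Formula ↥s} (hψ : ∀ w : α → M, ψ.Realize w → φ.Realize (s.domRestrict w))
    {t : Set α} {w₀ w : α → M} (hw : w ∈ realizeFiber ψ t w₀) :
    s.domRestrict w ∈ realizeFiber φ (Subtype.val ⁻¹' t) (s.domRestrict w₀) :=
  ⟨hψ w hw.1, fun _ ha => hw.2 ha⟩

lemma encard_image_eval_realizeFiber_le {ψ : (L[[M]]).Formula α} {s : Set α}
    {φ : (L[[M]]).Formula ↥s} (hψ : ∀ w : α → M, ψ.Realize w → φ.Realize (s.domRestrict w))
    {a : α} (ha : a ∈ s) (t : Set α) (w₀ : α → M) :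
    ((fun w => w a) '' realizeFiber ψ t w₀).encard ≤
      (realizeFiber φ (Subtype.val ⁻¹' t) (s.domRestrict w₀)).encard := by
  refine (encard_le_encard ?_).trans (encard_image_le (fun r : ↥s → M => r ⟨a, ha⟩) _)
  rintro _ ⟨w, hw, rfl⟩
  exact ⟨s.domRestrict w, restrict_mem_realizeFiber hψ hw, rfl⟩

lemma encard_realizeFiber_le_prod {ι : Type*} [Fintype ι] {ψ : (L[[M]]).Formula α}
    {s : ι → Set α} {φ : ∀ i, (L[[M]]).Formula ↥(s i)}
    (hψ : ∀ i (w : α → M), ψ.Realize w → (φ i).Realize ((s i).domRestrict w))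
    (hcov : ⋃ i, s i = univ)
    {t : Set α} {w₀ : α → M} {N : ι → ℕ∞}
    (hN : ∀ i, (realizeFiber (φ i) (Subtype.val ⁻¹' t) ((s i).domRestrict w₀)).encard ≤ N i) :
    (realizeFiber ψ t w₀).encard ≤ ∏ i, N i := by
  have hinj : Function.Injective (fun w : α → M => fun i => (s i).domRestrict w) := fun w w' h =>
    funext fun a => by
      obtain ⟨i, hi⟩ := mem_iUnion.1 (hcov ▸ mem_univ a)
      exact congrFun (congrFun h i) ⟨a, hi⟩
  calc (realizeFiber ψ t w₀).encard
      ≤ (pi univ fun i => realizeFiber (φ i) (Subtype.val ⁻¹' t) ((s i).domRestrict w₀)).encard :=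
        encard_le_encard_of_injOn (fun w hw i _ => restrict_mem_realizeFiber (hψ i) hw)
          hinj.injOn
    _ = ∏ i, (realizeFiber (φ i) (Subtype.val ⁻¹' t) ((s i).domRestrict w₀)).encard :=
        encard_pi_eq_prod_encard
    _ ≤ ∏ i, N i := Finset.prod_le_prod' fun i _ => hN i

lemma realizeFiber_subset_biUnion [DecidableEq α] (ψ : (L[[M]]).Formula α) (t : Set α)
    (w₀ : α → M) (a : α) :
    realizeFiber ψ t w₀ ⊆ ⋃ c ∈ (fun w => w a) '' realizeFiber ψ t w₀,
      realizeFiber ψ (t \ {a}) (Function.update w₀ a c) := by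
  intro w hw
  refine mem_biUnion (mem_image_of_mem _ hw) ⟨hw.1, fun b hb => ?_⟩
  by_cases hba : b = a
  · subst hba
    rw [Function.update_self]
  · rw [Function.update_of_ne hba]
    exact hw.2 fun hbt => hb ⟨hbt, hba⟩

theorem stmt3_general (L : Language) (M : Type) [L.Structure M] {α : Type}
    (k : ℕ) (s : Fin k → Set α)
    (φ : ∀ i : Fin k, (L[[M]]).Formula ↥(s i)) (hMA : ∀ i, IsMA L M (φ i))
    (hint : (⋂ i, s i).Nonempty) (hcov : (⋃ i, s i) = Set.univ)
    (ψ : (L[[M]]).Formula α)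
    (hψ : ∀ v : α → M, ψ.Realize v ↔ ∀ i, (φ i).Realize (fun a : ↥(s i) => v ↑a)) :
    IsMA L M ψ := by
  classical
  obtain ⟨a₀, ha₀⟩ := hint
  rw [mem_iInter] at ha₀
  have hconj : ∀ i (w : α → M), ψ.Realize w → (φ i).Realize ((s i).domRestrict w) :=
    fun i w hw => (hψ w).1 hw i
  choose N hN using fun i => (hMA i).exists_encard_realizeFiber_le
  refine isMA_of_encard_realizeFiber_le ((∑ i, N i) * ∏ i, N i) fun t _ htc w₀ => ?_
  obtain ⟨b, hbt⟩ := htc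
  obtain ⟨j, hbj⟩ := mem_iUnion.1 (hcov ▸ mem_univ b)
  -- the values at `a₀` are controlled by `φ j`, whose variable `b` lies outside `t`
  have hvalues : ((fun w => w a₀) '' realizeFiber ψ t w₀).encard ≤ N j :=
    (encard_image_eval_realizeFiber_le (hconj j) (ha₀ j) t w₀).trans
      (hN j _ ⟨⟨b, hbj⟩, hbt⟩ _)
  -- once the value at `a₀` is fixed, every `φ i` has a fixed variable
  have hfiber : ∀ c,
      (realizeFiber ψ (t \ {a₀}) (Function.update w₀ a₀ c)).encard ≤ ∏ i, (N i : ℕ∞) :=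
    fun c => encard_realizeFiber_le_prod hconj hcov fun i =>
      hN i (Subtype.val ⁻¹' (t \ {a₀})) ⟨⟨a₀, ha₀ i⟩, fun h => h.2 rfl⟩ _
  calc (realizeFiber ψ t w₀).encard
      ≤ ((fun w => w a₀) '' realizeFiber ψ t w₀).encard * ∏ i, (N i : ℕ∞) :=
        (encard_le_encard (realizeFiber_subset_biUnion ψ t w₀ a₀)).trans <|
          encard_biUnion_le_encard_mul (finite_of_encard_le_coe hvalues) fun c _ => hfiber c
    _ ≤ (∑ i, (N i : ℕ∞)) * ∏ i, (N i : ℕ∞) := by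
        gcongr
        exact hvalues.trans <|
          Finset.single_le_sum (f := fun i => (N i : ℕ∞)) (fun i _ => zero_le) (Finset.mem_univ j)
    _ = _ := by push_cast; rfl

/-- A conjunction of mutually algebraic formulas whose variable sets have a
common variable, and which jointly cover all the variables, is mutually algebraic. -/
theorem stmt3 (L : Language) (M : Type) [L.Structure M] {α : Type} [Finite α]
    (k : ℕ) (hk : 1 ≤ k) (s : Fin k → Set α)
    (φ : ∀ i : Fin k, (L[[M]]).Formula ↥(s i)) (hMA : ∀ i, IsMA L M (φ i))
    (hint : (⋂ i, s i).Nonempty) (hcov : (⋃ i, s i) = Set.univ)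
    (ψ : (L[[M]]).Formula α)
    (hψ : ∀ v : α → M, ψ.Realize v ↔ ∀ i, (φ i).Realize (fun a : ↥(s i) => v ↑a)) :
    IsMA L M ψ :=
  stmt3_general L M k s φ hMA hint hcov ψ hψ
end

section
/- Let M be an L-structure and let 𝒫 be the set of L(M)-formulas equivalent modulo the elementary diagram T(M) to a positive Boolean combination of preferred formulas. Then every formula in 𝒫 is T(M)-equivalent to an existential formula ∃x̄ ψ(x̄,ȳ) with ψ quantifier-free such that for some K ∈ ℕ, T(M) ⊨ ∀ȳ ∃^{<K} x̄ ψ(x̄,ȳ). -/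
open FirstOrder Language Set

/-! A preferred formula `∃x̄ (R(x̄,ȳ) ∧ S(x̄,ȳ,z̄))` is already existential with quantifier-free
matrix `R ∧ S`. Because `R` is mutually algebraic and `ȳ` is nonempty, in `M` every `ȳ` has at most
`K` witnesses `x̄`; "at most `K` solutions" is first-order, so the bound holds in every model of
`T(M)`. Conjunctions are handled by concatenating witness tuples (bound `K₁ K₂`); for disjunctions
the witness block of the disjunct that is not used is pinned to a free variable, which keeps the
number of witnesses at most `K₁ + K₂`. -/

theorem Set.natCast_le_encard_iff {X : Type*} {s : Set X} {k : ℕ} :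
    (k : ℕ∞) ≤ s.encard ↔ ∃ f : Fin k → X, Function.Injective f ∧ ∀ j, f j ∈ s := by
  constructor
  · intro h
    obtain ⟨t, hts, ht⟩ := exists_subset_encard_eq h
    have : Finite t := finite_of_encard_eq_coe ht
    obtain ⟨e⟩ : Nonempty (Fin k ≃ t) :=
      Finite.card_eq.mp (by simp [Nat.card_coe_set_eq, ncard, ht])
    exact ⟨fun j => e j, Subtype.coe_injective.comp e.injective, fun j => hts (e j).2⟩
  · rintro ⟨f, hf, hfs⟩
    calc (k : ℕ∞) = (range f).encard := by
          rw [← image_univ, hf.encard_image, encard_univ, ENat.card_eq_coe_fintype_card,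
            Fintype.card_fin]
      _ ≤ s.encard := encard_le_encard (range_subset_iff.2 hfs)

theorem FirstOrder.Language.BoundedFormula.IsQF.iInf {L : Language} {α β : Type*} {n : ℕ}
    [Finite β] {f : β → L.BoundedFormula α n} (h : ∀ b, (f b).IsQF) : (iInf f).IsQF := by
  let _ := Fintype.ofFinite β
  suffices ∀ l : List (L.BoundedFormula α n), (∀ φ ∈ l, φ.IsQF) → (l.foldr (· ⊓ ·) ⊤).IsQF from
    this _ (by simpa using h)
  intro l hl
  induction l with
  | nil => exact IsQF.top
  | cons φ l ih =>
    rw [List.forall_mem_cons] at hl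
    exact hl.1.inf (ih hl.2)

theorem IsPED.isQF {L : Language} {α : Type} {φ : L.Formula α} (h : IsPED φ) : φ.IsQF := by
  induction h with
  | eq a b => exact (BoundedFormula.IsAtomic.equal _ _).isQF
  | not _ ih => exact ih.not
  | inf _ _ ih₁ ih₂ => exact ih₁.inf ih₂
  | sup _ _ ih₁ ih₂ => exact ih₁.sup ih₂

namespace FirstOrder.Language.Formula

variable {L : Language} {ι β : Type*}

theorem realize_relabel_sumMap {ι' κ κ' N : Type*} [L.Structure N] (φ : L.Formula (ι ⊕ κ))
    (f : ι → ι') (g : κ → κ') (u : ι' → N) (v : κ' → N) :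
    (φ.relabel (Sum.map f g)).Realize (Sum.elim u v) ↔ φ.Realize (Sum.elim (u ∘ f) (v ∘ g)) := by
  rw [realize_relabel, Sum.elim_comp_map]

noncomputable def existsDistinctSolutions [Finite ι] (R : L.Formula (ι ⊕ β)) (k : ℕ) :
    L.Formula β :=
  iExs (Fin k × ι) <|
    iInf (fun j : Fin k => R.relabel (Sum.elim (fun i => Sum.inr (j, i)) Sum.inl)) ⊓
    iInf fun p : {p : Fin k × Fin k // p.1 ≠ p.2} => iSup fun i : ι =>
      (Term.equal (Term.var (Sum.inr (p.1.1, i))) (Term.var (Sum.inr (p.1.2, i)))).not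

theorem realize_existsDistinctSolutions [Finite ι] {N : Type*} [L.Structure N]
    (R : L.Formula (ι ⊕ β)) (k : ℕ) (v : β → N) :
    (R.existsDistinctSolutions k).Realize v ↔
      (k : ℕ∞) ≤ {u : ι → N | R.Realize (Sum.elim u v)}.encard := by
  rw [Set.natCast_le_encard_iff]
  simp only [existsDistinctSolutions, realize_iExs, realize_inf, realize_iInf, realize_iSup,
    realize_relabel, realize_not, realize_equal, Term.realize_var]
  refine (Equiv.curry (Fin k) ι N).exists_congr fun i => (and_congr ?_ ?_).trans and_comm
  · refine forall_congr' fun j => Iff.of_eq (congrArg R.Realize ?_)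
    ext (_ | _) <;> rfl
  · simp only [Function.Injective, ne_eq, Subtype.forall, Prod.forall, Sum.elim_inr, funext_iff,
      Equiv.curry_apply, Function.curry_apply]
    exact forall₂_congr fun j j' => by rw [← not_forall]; exact not_imp_not

theorem realize_not_existsDistinctSolutions_succ [Finite ι] {N : Type*} [L.Structure N]
    (R : L.Formula (ι ⊕ β)) (K : ℕ) (v : β → N) :
    (R.existsDistinctSolutions (K + 1)).not.Realize v ↔
      {u : ι → N | R.Realize (Sum.elim u v)}.encard ≤ K := by
  rw [realize_not, realize_existsDistinctSolutions, Nat.cast_add, Nat.cast_one,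
    ENat.add_one_le_iff (ENat.natCast_ne_top K), not_lt]

noncomputable def varsEqVar [Finite ι] (f : ι → β) (b : β) : L.Formula β :=
  iInf fun i => Term.equal (Term.var (f i)) (Term.var b)

theorem realize_varsEqVar [Finite ι] {N : Type*} [L.Structure N] (f : ι → β) (b : β) (v : β → N) :
    (varsEqVar (L := L) f b).Realize v ↔ ∀ i, v (f i) = v b := by
  simp only [varsEqVar, realize_iInf, realize_equal, Term.realize_var]

theorem isQF_varsEqVar [Finite ι] (f : ι → β) (b : β) : (varsEqVar (L := L) f b).IsQF :=
  BoundedFormula.IsQF.iInf fun _ => (BoundedFormula.IsAtomic.equal _ _).isQF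

section ElementaryDiagram

variable {M : Type*} [L.Structure M] {N : Type*} [L[[M]].Structure N]

theorem realize_of_models_elementaryDiagram [Finite β] {φ : L[[M]].Formula β}
    (hφ : ∀ w : β → M, φ.Realize w) (hN : N ⊨ L.elementaryDiagram M)
    (v : β → N) : φ.Realize v := by
  let σ : L[[M]].Sentence := (φ.relabel Sum.inr : L[[M]].Formula (Empty ⊕ β)).iAlls
  have hMσ : M ⊨ σ := by
    simpa only [σ, Sentence.Realize, Formula.realize_iAlls, Formula.realize_relabel,
      Function.comp_def, Sum.elim_inr] using hφ
  have hNσ : N ⊨ σ := (L.elementaryDiagram M).realize_sentence_of_mem (mem_completeTheory.2 hMσ)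
  simp only [σ, Sentence.Realize, Formula.realize_iAlls, Formula.realize_relabel,
    Function.comp_def, Sum.elim_inr] at hNσ
  exact hNσ v

theorem encard_realize_le_of_models_elementaryDiagram [Finite ι] [Finite β]
    {R : L[[M]].Formula (ι ⊕ β)} {K : ℕ}
    (hM : ∀ w : β → M, {u : ι → M | R.Realize (Sum.elim u w)}.encard ≤ K)
    (hN : N ⊨ L.elementaryDiagram M) (v : β → N) :
    {u : ι → N | R.Realize (Sum.elim u v)}.encard ≤ K := by
  simp only [← realize_not_existsDistinctSolutions_succ] at hM ⊢
  exact realize_of_models_elementaryDiagram hM hN v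

end ElementaryDiagram

end FirstOrder.Language.Formula

theorem IsMA.exists_encard_realize_le {L : Language} {M : Type} [L.Structure M] {ι κ : Type}
    [Nonempty κ] {R : L[[M]].Formula (ι ⊕ κ)} (hR : IsMA L M R) :
    ∃ K : ℕ, ∀ w : κ → M, {u : ι → M | R.Realize (Sum.elim u w)}.encard ≤ K := by
  obtain ⟨K, hK⟩ := hR
  rcases isEmpty_or_nonempty ι with hι | ⟨⟨i₀⟩⟩
  · exact ⟨1, fun w => encard_le_one_iff.2 fun _ _ _ _ => Subsingleton.elim _ _⟩
  refine ⟨K, fun w => ?_⟩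
  obtain ⟨k₀⟩ := ‹Nonempty κ›
  let t : Set (ι ⊕ κ) := range Sum.inl
  let F : (ι → M) → (t → M) := fun u x => Sum.elim u w x.1
  -- `combine` reads `v` only at `Sum.inr`, so the filler `w k₀` is never used
  let v : ↥tᶜ → M := fun x => Sum.elim (fun _ => w k₀) w x.1
  have hcombine : ∀ u, combine t (F u) v = Sum.elim u w := by
    intro u
    ext (i | k) <;> simp [combine, t, F, v]
  have hF : Function.Injective F := fun u u' h => funext fun i => congrFun h ⟨_, mem_range_self i⟩
  calc {u : ι → M | R.Realize (Sum.elim u w)}.encard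
      = (F '' {u : ι → M | R.Realize (Sum.elim u w)}).encard := (hF.encard_image _).symm
    _ ≤ {u' : t → M | R.Realize (combine t u' v)}.encard := by
      refine encard_le_encard ?_
      rintro _ ⟨u, hu, rfl⟩
      simpa [hcombine] using hu
    _ ≤ K := hK t ⟨_, mem_range_self i₀⟩ ⟨Sum.inr k₀, by simp [t]⟩ v

theorem PosComb.nonempty_of_isPreferred {L : Language} {M : Type} [L.Structure M] {α : Type}
    {θ : L[[M]].Formula α} (h : PosComb (IsPreferred L M) θ) : Nonempty α := by
  induction h with
  | base hθ =>
    obtain ⟨s, -, -, -, ⟨a, -⟩, -⟩ := hθ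
    exact ⟨a⟩
  | inf _ _ ih => exact ih
  | sup _ _ ih => exact ih

def IsAlgebraicallyExistential (L : Language) (M : Type) [L.Structure M] {α : Type}
    (θ : L[[M]].Formula α) : Prop :=
  ∃ (n : ℕ) (ψ : L[[M]].Formula (Fin n ⊕ α)) (K : ℕ), ψ.IsQF ∧
    ∀ (N : Type) [L[[M]].Structure N], N ⊨ L.elementaryDiagram M → ∀ v : α → N,
      {u : Fin n → N | ψ.Realize (Sum.elim u v)}.encard ≤ K ∧
      (θ.Realize v ↔ {u : Fin n → N | ψ.Realize (Sum.elim u v)}.Nonempty)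

section AlgebraicallyExistential

variable {L : Language} {M : Type} [L.Structure M] {α : Type}

theorem IsPreferred.isAlgebraicallyExistential [Finite α] {θ : L[[M]].Formula α}
    (h : IsPreferred L M θ) : IsAlgebraicallyExistential L M θ := by
  obtain ⟨s, n, R, S, hs, hRQF, hR, hS, hθ⟩ := h
  have : Nonempty s := hs.to_subtype
  obtain ⟨K, hK⟩ := hR.exists_encard_realize_le
  refine ⟨n, R.relabel (Sum.map id (↑)) ⊓ S, K, (hRQF.relabel _).inf hS.isQF, fun N _ hN v => ?_⟩
  have hψ : ∀ u : Fin n → N, (R.relabel (Sum.map id (↑)) ⊓ S).Realize (Sum.elim u v) ↔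
      R.Realize (Sum.elim u fun a : s => v a) ∧ S.Realize (Sum.elim u v) := by
    intro u
    rw [Formula.realize_inf, Formula.realize_relabel_sumMap, Function.comp_id]
    rfl
  exact ⟨(encard_le_encard fun u hu => ((hψ u).1 hu).1).trans
      (Formula.encard_realize_le_of_models_elementaryDiagram hK hN _),
    (hθ N hN v).trans (exists_congr fun u => (hψ u).symm)⟩

theorem IsAlgebraicallyExistential.inf {θ₁ θ₂ : L[[M]].Formula α}
    (h₁ : IsAlgebraicallyExistential L M θ₁) (h₂ : IsAlgebraicallyExistential L M θ₂) :
    IsAlgebraicallyExistential L M (θ₁ ⊓ θ₂) := by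
  obtain ⟨n₁, ψ₁, K₁, hψ₁, h₁⟩ := h₁
  obtain ⟨n₂, ψ₂, K₂, hψ₂, h₂⟩ := h₂
  refine ⟨n₁ + n₂, ψ₁.relabel (Sum.map (Fin.castAdd n₂) id) ⊓
    ψ₂.relabel (Sum.map (Fin.natAdd n₁) id), K₁ * K₂, (hψ₁.relabel _).inf (hψ₂.relabel _),
    fun N _ hN v => ?_⟩
  obtain ⟨hK₁, hθ₁⟩ := h₁ N hN v
  obtain ⟨hK₂, hθ₂⟩ := h₂ N hN v
  have hsol : {w : Fin (n₁ + n₂) → N | (ψ₁.relabel (Sum.map (Fin.castAdd n₂) id) ⊓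
      ψ₂.relabel (Sum.map (Fin.natAdd n₁) id)).Realize (Sum.elim w v)} =
      Fin.appendEquiv n₁ n₂ '' ({u | ψ₁.Realize (Sum.elim u v)} ×ˢ
        {u | ψ₂.Realize (Sum.elim u v)}) := by
    ext w
    simp only [Equiv.image_eq_preimage_symm, mem_preimage, mem_prod, mem_ofPred,
      Formula.realize_inf, Formula.realize_relabel_sumMap, Fin.appendEquiv_symm_apply,
      Function.comp_id]
    rfl
  rw [hsol, (Fin.appendEquiv n₁ n₂).injective.encard_image, encard_prod, image_nonempty,
    prod_nonempty_iff, Formula.realize_inf, hθ₁, hθ₂, Nat.cast_mul]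
  exact ⟨mul_le_mul' hK₁ hK₂, Iff.rfl⟩

theorem IsAlgebraicallyExistential.sup (a : α) {θ₁ θ₂ : L[[M]].Formula α}
    (h₁ : IsAlgebraicallyExistential L M θ₁) (h₂ : IsAlgebraicallyExistential L M θ₂) :
    IsAlgebraicallyExistential L M (θ₁ ⊔ θ₂) := by
  obtain ⟨n₁, ψ₁, K₁, hψ₁, h₁⟩ := h₁
  obtain ⟨n₂, ψ₂, K₂, hψ₂, h₂⟩ := h₂
  let ψ : L[[M]].Formula (Fin (n₁ + n₂) ⊕ α) :=
    ψ₁.relabel (Sum.map (Fin.castAdd n₂) id) ⊓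
      Formula.varsEqVar (Sum.inl ∘ Fin.natAdd n₁) (Sum.inr a) ⊔
    Formula.varsEqVar (Sum.inl ∘ Fin.castAdd n₂) (Sum.inr a) ⊓
      ψ₂.relabel (Sum.map (Fin.natAdd n₁) id)
  refine ⟨n₁ + n₂, ψ, K₁ + K₂, ((hψ₁.relabel _).inf (Formula.isQF_varsEqVar _ _)).sup
    ((Formula.isQF_varsEqVar _ _).inf (hψ₂.relabel _)), fun N _ hN v => ?_⟩
  obtain ⟨hK₁, hθ₁⟩ := h₁ N hN v
  obtain ⟨hK₂, hθ₂⟩ := h₂ N hN v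
  have hsol : {w : Fin (n₁ + n₂) → N | ψ.Realize (Sum.elim w v)} =
      Fin.appendEquiv n₁ n₂ '' ({u | ψ₁.Realize (Sum.elim u v)} ×ˢ {fun _ => v a} ∪
        {fun _ => v a} ×ˢ {u | ψ₂.Realize (Sum.elim u v)}) := by
    ext w
    simp only [ψ, Equiv.image_eq_preimage_symm, mem_preimage, mem_union, mem_prod, mem_ofPred,
      mem_singleton_iff, Formula.realize_sup, Formula.realize_inf, Formula.realize_varsEqVar,
      Formula.realize_relabel_sumMap, Fin.appendEquiv_symm_apply, Function.comp_id, funext_iff]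
    rfl
  rw [hsol, (Fin.appendEquiv n₁ n₂).injective.encard_image, image_nonempty, union_nonempty,
    prod_nonempty_iff, prod_nonempty_iff, Formula.realize_sup, hθ₁, hθ₂]
  refine ⟨?_, by simp⟩
  calc _ ≤ _ := encard_union_le _ _
    _ ≤ (K₁ + K₂ : ℕ) := by simpa [encard_prod] using add_le_add hK₁ hK₂

theorem PosComb.isAlgebraicallyExistential [Finite α] {θ : L[[M]].Formula α}
    (h : PosComb (IsPreferred L M) θ) : IsAlgebraicallyExistential L M θ := by
  induction h with
  | base hθ => exact hθ.isAlgebraicallyExistential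
  | inf _ _ ih₁ ih₂ => exact ih₁.inf ih₂
  | sup h₁ _ ih₁ ih₂ => exact ih₁.sup (h₁.nonempty_of_isPreferred).some ih₂

end AlgebraicallyExistential

/-- Every formula in `𝒫` is `T(M)`-equivalent to an "algebraically existential"
formula `∃x̄ ψ(x̄,ȳ)` with `ψ` quantifier-free and, for some `K`,
`T(M) ⊨ ∀ȳ ∃^{<K} x̄ ψ(x̄,ȳ)`. -/
theorem stmt8 (L : Language) (M : Type) [L.Structure M] {α : Type} [Finite α]
    (φ : (L[[M]]).Formula α) (h : InP L M φ) :
    ∃ (n : ℕ) (ψ : (L[[M]]).Formula (Fin n ⊕ α)) (K : ℕ), ψ.IsQF ∧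
      ∀ (N : Type) [(L[[M]]).Structure N], N ⊨ L.elementaryDiagram M →
        ∀ v : α → N,
          {u : Fin n → N | ψ.Realize (Sum.elim u v)}.encard < (K : ℕ∞) ∧
          (φ.Realize v ↔ ∃ u : Fin n → N, ψ.Realize (Sum.elim u v)) := by
  obtain ⟨θ, hθ, hφθ⟩ := h
  obtain ⟨n, ψ, K, hψ, hbound⟩ := hθ.isAlgebraicallyExistential
  refine ⟨n, ψ, K + 1, hψ, fun N _ hN v => ?_⟩
  obtain ⟨hK, hθψ⟩ := hbound N hN v
  exact ⟨hK.trans_lt (by exact_mod_cast K.lt_succ_self), (hφθ N hN v).trans hθψ⟩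
end

section
/- Let M be an L-structure and R(x̄,ȳ) an L(M)-formula such that T(M) ⊨ ∃^{<N} x̄ȳ R(x̄,ȳ) (as a formula with all variables existentially counted, i.e., R has fewer than N total solutions in any model of T(M)). Then for every r ∈ ℕ, the formula ∃^{=r} x̄ R(x̄,ȳ) is T(M)-equivalent to the disjunction over m < N of (∃^{=m} w̄ R'(w̄, y*) ∧ θ_m(ȳ)), following the coding of Theorem 2.4(1)⇒(2): counting solutions with ȳ free can be reduced to counting solutions of a formula with a single free variable together with equality constraints. -/
open FirstOrder Language Set

/-!
Write `ȳ = ȳ' y*`. The map `x̄ ↦ x̄ ȳ'` is a bijection from the solutions of `R(x̄, ȳ)` onto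
those solutions `x̄ ȳ''` of `R(·, y*)` with `ȳ'' = ȳ'`. If `R(·, y*)` has exactly `m` solutions,
an injective enumeration of `m` of them enumerates all of them, so among the enumerated tuples
exactly `#{x̄ | R(x̄, ȳ)}` have `ȳ'`-part equal to `ȳ'`.
-/

theorem Set.range_eq_of_injective_of_encard_eq {X : Type*} {S : Set X} {m : ℕ}
    (hS : S.encard = m) {f : Fin m → X} (hf : Function.Injective f) (hfS : ∀ i, f i ∈ S) :
    range f = S := by
  have hfin : S.Finite := finite_of_encard_eq_coe hS
  refine hfin.eq_of_subset_of_encard_le' (range_subset_iff.2 hfS) ?_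
  rw [← image_univ, hf.encard_image, encard_univ, ENat.card_eq_coe_fintype_card,
    Fintype.card_fin, hS]

theorem Set.exists_injective_ncard_preimage_eq_iff {X : Type*} {S : Set X} (T : Set X) {m : ℕ}
    (hS : S.encard = m) (r : ℕ) :
    (∃ f : Fin m → X, Function.Injective f ∧ (∀ i, f i ∈ S) ∧ {i | f i ∈ T}.ncard = r) ↔
      (S ∩ T).ncard = r := by
  have ncard_preimage : ∀ f : Fin m → X, Function.Injective f → (∀ i, f i ∈ S) →
      {i | f i ∈ T}.ncard = (S ∩ T).ncard := fun f hf hfS => by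
    rw [← ncard_image_of_injective _ hf, ← range_eq_of_injective_of_encard_eq hS hf hfS,
      inter_comm]
    exact congrArg ncard (image_preimage_eq_inter_range)
  constructor
  · rintro ⟨f, hf, hfS, rfl⟩
    exact (ncard_preimage f hf hfS).symm
  · intro h
    have : Finite S := (finite_of_encard_eq_coe hS).to_subtype
    have hcard : Nat.card S = m := by
      rw [Nat.card_coe_set_eq, ncard_def, hS, ENat.toNat_natCast]
    let q : Fin m ≃ S := (Finite.equivFinOfCardEq hcard).symm
    have hq : Function.Injective (fun i => (q i : X)) := Subtype.coe_injective.comp q.injective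
    exact ⟨_, hq, fun i => (q i).2, (ncard_preimage _ hq fun i => (q i).2).trans h⟩

theorem encard_sumElim_eq_encard_fiber {X α β : Type*} (P : (α ⊕ (β ⊕ Unit) → X) → Prop)
    (v : β ⊕ Unit → X) :
    {u : α → X | P (Sum.elim u v)}.encard =
      {w : α ⊕ β → X | P (Sum.elim (w ∘ Sum.inl) (Sum.elim (w ∘ Sum.inr)
        (fun _ => v (Sum.inr ())))) ∧ ∀ p, w (Sum.inr p) = v (Sum.inl p)}.encard := by
  have hinj : Function.Injective (fun u : α → X => Sum.elim u (v ∘ Sum.inl)) :=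
    fun u₁ u₂ h => funext fun a => congrFun h (Sum.inl a)
  rw [← hinj.encard_image]
  congr 1
  ext w
  constructor
  · rintro ⟨u, hu, rfl⟩
    have h : Sum.elim u v = Sum.elim (Sum.elim u (v ∘ Sum.inl) ∘ Sum.inl)
        (Sum.elim (Sum.elim u (v ∘ Sum.inl) ∘ Sum.inr) fun _ => v (Sum.inr ())) := by
      ext (a | p | ⟨⟩) <;> rfl
    exact ⟨h ▸ hu, fun p => rfl⟩
  · rintro ⟨hw, hwv⟩
    have hw' : Sum.elim (w ∘ Sum.inl) (v ∘ Sum.inl) = w := by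
      ext (a | p)
      · rfl
      · exact (hwv p).symm
    refine ⟨w ∘ Sum.inl, ?_, hw'⟩
    have h : Sum.elim (w ∘ Sum.inl) (Sum.elim (w ∘ Sum.inr) fun _ => v (Sum.inr ())) =
        Sum.elim (w ∘ Sum.inl) v := by
      ext (a | p | ⟨⟩)
      · rfl
      · exact hwv p
      · rfl
    exact (h ▸ hw : P _)

theorem stmt18_general (L : Language) (M : Type) [L.Structure M] {α β : Type}
    (R : (L[[M]]).Formula (α ⊕ (β ⊕ Unit))) (Nb : ℕ)
    (hbound : ∀ (N' : Type) [(L[[M]]).Structure N'], N' ⊨ L.elementaryDiagram M →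
      ∀ c : N',
        {w : α ⊕ β → N' | R.Realize
          (Sum.elim (w ∘ Sum.inl) (Sum.elim (w ∘ Sum.inr) (fun _ => c)))}.encard < (Nb : ℕ∞))
    (r : ℕ)
    (χ : (L[[M]]).Formula (β ⊕ Unit))
    (hχ : ∀ (N' : Type) [(L[[M]]).Structure N'], N' ⊨ L.elementaryDiagram M →
      ∀ v : β ⊕ Unit → N',
        (χ.Realize v ↔ {u : α → N' | R.Realize (Sum.elim u v)}.encard = (r : ℕ∞)))
    (ρ : ℕ → (L[[M]]).Formula (β ⊕ Unit))
    (hρ : ∀ (m : ℕ) (N' : Type) [(L[[M]]).Structure N'], N' ⊨ L.elementaryDiagram M →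
      ∀ v : β ⊕ Unit → N',
        ((ρ m).Realize v ↔
          {w : α ⊕ β → N' | R.Realize (Sum.elim (w ∘ Sum.inl)
            (Sum.elim (w ∘ Sum.inr) (fun _ => v (Sum.inr ()))))}.encard = (m : ℕ∞)))
    (θ : ℕ → (L[[M]]).Formula (β ⊕ Unit))
    (hθ : ∀ (m : ℕ) (N' : Type) [(L[[M]]).Structure N'], N' ⊨ L.elementaryDiagram M →
      ∀ v : β ⊕ Unit → N',
        ((θ m).Realize v ↔
          ∃ f : Fin m → (α ⊕ β → N'), Function.Injective f ∧
            (∀ i, R.Realize (Sum.elim (f i ∘ Sum.inl)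
              (Sum.elim (f i ∘ Sum.inr) (fun _ => v (Sum.inr ()))))) ∧
            {i : Fin m | ∀ p : β, f i (Sum.inr p) = v (Sum.inl p)}.ncard = r)) :
    ∀ (N' : Type) [(L[[M]]).Structure N'], N' ⊨ L.elementaryDiagram M →
      ∀ v : β ⊕ Unit → N',
        (χ.Realize v ↔ ∃ m, m < Nb ∧ (ρ m).Realize v ∧ (θ m).Realize v) := by
  intro N' _ hN v
  set S : Set (α ⊕ β → N') := {w | R.Realize
    (Sum.elim (w ∘ Sum.inl) (Sum.elim (w ∘ Sum.inr) (fun _ => v (Sum.inr ()))))}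
  set T : Set (α ⊕ β → N') := {w | ∀ p, w (Sum.inr p) = v (Sum.inl p)}
  have hSN : S.encard < Nb := hbound N' hN _
  have hfin : (S ∩ T).Finite :=
    (finite_of_encard_le_coe hSN.le).subset inter_subset_left
  rw [hχ N' hN v, encard_sumElim_eq_encard_fiber (fun w => R.Realize w) v]
  change (S ∩ T).encard = r ↔ _
  rw [← hfin.cast_ncard_eq, Nat.cast_inj]
  constructor
  · intro h
    obtain ⟨m, hm⟩ := ENat.ne_top_iff_exists.1 (hSN.trans_le le_top).ne
    refine ⟨m, by exact_mod_cast hm ▸ hSN, (hρ m N' hN v).2 hm.symm, (hθ m N' hN v).2 ?_⟩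
    exact (exists_injective_ncard_preimage_eq_iff T hm.symm r).2 h
  · rintro ⟨m, -, hρm, hθm⟩
    exact (exists_injective_ncard_preimage_eq_iff T ((hρ m N' hN v).1 hρm) r).1 ((hθ m N' hN v).1 hθm)

/-- the coding in (1) ⇒ (2) of Theorem 2.4: if `R(x̄,ȳ) ∈ 𝒜`, `y* ∈ ȳ` is a
chosen variable with `ȳ = ȳ'⌢y*`, and `N` bounds the number of solutions of `R(x̄ȳ', y*)` for
every value of `y*` (in every model of `T(M)`), then `∃^{=r} x̄ R(x̄,ȳ)` is `T(M)`-equivalent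
to `⋁_{m<N} (∃^{=m} w̄ R(w̄,y*) ∧ θ_m(ȳ))`, where `θ_m(ȳ)` asserts the existence of `m`
distinct tuples `ū_i v̄_i` each satisfying `R(ū_i v̄_i, y*)`, exactly `r` of the `v̄_i` being
equal to `ȳ'`. Here `α` indexes `x̄`, `β` indexes `ȳ'`, and `Unit` indexes `y*`. -/
theorem stmt18 (L : Language) (M : Type) [L.Structure M] {α β : Type} [Finite α] [Finite β]
    (R : (L[[M]]).Formula (α ⊕ (β ⊕ Unit))) (hqf : R.IsQF) (hma : IsMA L M R) (Nb : ℕ)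
    (hbound : ∀ (N' : Type) [(L[[M]]).Structure N'], N' ⊨ L.elementaryDiagram M →
      ∀ c : N',
        {w : α ⊕ β → N' | R.Realize
          (Sum.elim (w ∘ Sum.inl) (Sum.elim (w ∘ Sum.inr) (fun _ => c)))}.encard < (Nb : ℕ∞))
    (r : ℕ)
    (χ : (L[[M]]).Formula (β ⊕ Unit))
    (hχ : ∀ (N' : Type) [(L[[M]]).Structure N'], N' ⊨ L.elementaryDiagram M →
      ∀ v : β ⊕ Unit → N',
        (χ.Realize v ↔ {u : α → N' | R.Realize (Sum.elim u v)}.encard = (r : ℕ∞)))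
    (ρ : ℕ → (L[[M]]).Formula (β ⊕ Unit))
    (hρ : ∀ (m : ℕ) (N' : Type) [(L[[M]]).Structure N'], N' ⊨ L.elementaryDiagram M →
      ∀ v : β ⊕ Unit → N',
        ((ρ m).Realize v ↔
          {w : α ⊕ β → N' | R.Realize (Sum.elim (w ∘ Sum.inl)
            (Sum.elim (w ∘ Sum.inr) (fun _ => v (Sum.inr ()))))}.encard = (m : ℕ∞)))
    (θ : ℕ → (L[[M]]).Formula (β ⊕ Unit))
    (hθ : ∀ (m : ℕ) (N' : Type) [(L[[M]]).Structure N'], N' ⊨ L.elementaryDiagram M →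
      ∀ v : β ⊕ Unit → N',
        ((θ m).Realize v ↔
          ∃ f : Fin m → (α ⊕ β → N'), Function.Injective f ∧
            (∀ i, R.Realize (Sum.elim (f i ∘ Sum.inl)
              (Sum.elim (f i ∘ Sum.inr) (fun _ => v (Sum.inr ()))))) ∧
            {i : Fin m | ∀ p : β, f i (Sum.inr p) = v (Sum.inl p)}.ncard = r)) :
    ∀ (N' : Type) [(L[[M]]).Structure N'], N' ⊨ L.elementaryDiagram M →
      ∀ v : β ⊕ Unit → N',
        (χ.Realize v ↔ ∃ m, m < Nb ∧ (ρ m).Realize v ∧ (θ m).Realize v) :=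
  stmt18_general L M R Nb hbound r χ hχ ρ hρ θ hθ
end
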